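/- Let I be a nonempty set. Then the Banach algebra M_I is self-induced: the multiplication map M_I ⊗̂_{M_I} M_I → M_I, a ⊗ b ↦ ab, is an isomorphism of M_I-bimodules. -/

import Mathlib

open scoped TensorProduct BigOperators ENNReal
open Filter

noncomputable section

/-- `ℓ¹(X)`: the Banach space of absolutely summable complex functions on `X`. -/
abbrev L1 (X : Type) : Type := lp (fun _ : X => ℂ) 1

open Classical in
/-- The point mass `δ_x` in `ℓ¹(X)`. -/
noncomputable def delta {X : Type} (x : X) : L1 X := lp.single 1 x (1 : ℂ)

/-- The projective tensor norm of an element of the algebraic tensor product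
`E ⊗[ℂ] F`: the infimum of `∑ ‖xᵢ‖ ‖yᵢ‖` over all finite representations
`z = ∑ xᵢ ⊗ yᵢ`. -/
def projNorm {E F : Type} [SeminormedAddCommGroup E] [NormedSpace ℂ E]
    [SeminormedAddCommGroup F] [NormedSpace ℂ F] (z : E ⊗[ℂ] F) : ℝ :=
  sInf {r : ℝ | ∃ (n : ℕ) (x : Fin n → E) (y : Fin n → F),
    z = ∑ i, x i ⊗ₜ[ℂ] y i ∧ r = ∑ i, ‖x i‖ * ‖y i‖}

/-- `(T, φ)` is a realization of the completed projective tensor product `E ⊗̂ F`: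
`T` is a Banach space, the canonical map from the algebraic tensor product is an
isometry with respect to the projective tensor norm, and it has dense range. -/
structure IsProjTensor (E F T : Type) [SeminormedAddCommGroup E] [NormedSpace ℂ E]
    [SeminormedAddCommGroup F] [NormedSpace ℂ F]
    [SeminormedAddCommGroup T] [NormedSpace ℂ T]
    (φ : E →ₗ[ℂ] F →ₗ[ℂ] T) : Prop where
  complete : CompleteSpace T
  isometry : ∀ z : E ⊗[ℂ] F, ‖TensorProduct.lift φ z‖ = projNorm z
  dense : DenseRange ⇑(TensorProduct.lift φ)

/-- The closed linear span of the `A`-balancing relations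
`{x·a ⊗ y - x ⊗ a·y}` inside a realization `T` of `E ⊗̂ F`; the quotient
`T ⧸ balancer φ r l` is the `A`-module tensor product `E ⊗̂_A F`. -/
def balancer {A E F T : Type} [SeminormedAddCommGroup E] [NormedSpace ℂ E]
    [SeminormedAddCommGroup F] [NormedSpace ℂ F]
    [SeminormedAddCommGroup T] [NormedSpace ℂ T]
    (φ : E →ₗ[ℂ] F →ₗ[ℂ] T) (r : E → A → E) (l : A → F → F) : Submodule ℂ T :=
  (Submodule.span ℂ {z : T | ∃ (x : E) (a : A) (y : F), z = φ (r x a) y - φ x (l a y)}).topologicalClosure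

/-- A left Banach `A`-module `(E, l)` is `A`-induced: for every realization `T` of
`A ⊗̂ E`, the canonical map `A ⊗̂_A E → E`, `a ⊗ x ↦ a·x`, is a topological
isomorphism. -/
def LeftInduced {A E : Type} [SeminormedAddCommGroup A] [NormedSpace ℂ A]
    [SeminormedAddCommGroup E] [NormedSpace ℂ E]
    (mulA : A →L[ℂ] A →L[ℂ] A) (l : A →L[ℂ] E →L[ℂ] E) : Prop :=
  ∀ (T : Type) [SeminormedAddCommGroup T] [NormedSpace ℂ T]
    (φ : A →ₗ[ℂ] E →ₗ[ℂ] T), IsProjTensor A E T φ →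
    ∃ e : (T ⧸ balancer φ (fun a b => mulA a b) (fun a x => l a x)) ≃L[ℂ] E,
      ∀ (a : A) (x : E), e (Submodule.Quotient.mk (φ a x)) = l a x

/-- A right Banach `A`-module `(E, r)` is `A`-induced. -/
def RightInduced {A E : Type} [SeminormedAddCommGroup A] [NormedSpace ℂ A]
    [SeminormedAddCommGroup E] [NormedSpace ℂ E]
    (mulA : A →L[ℂ] A →L[ℂ] A) (r : E →L[ℂ] A →L[ℂ] E) : Prop :=
  ∀ (T : Type) [SeminormedAddCommGroup T] [NormedSpace ℂ T]
    (φ : E →ₗ[ℂ] A →ₗ[ℂ] T), IsProjTensor E A T φ →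
    ∃ e : (T ⧸ balancer φ (fun x a => r x a) (fun a b => mulA a b)) ≃L[ℂ] E,
      ∀ (x : E) (a : A), e (Submodule.Quotient.mk (φ x a)) = r x a

/-- A Banach algebra `(A, mul)` is self-induced: the multiplication map
`A ⊗̂_A A → A` is an isomorphism of `A`-bimodules. -/
def SelfInduced {A : Type} [SeminormedAddCommGroup A] [NormedSpace ℂ A]
    (mulA : A →L[ℂ] A →L[ℂ] A) : Prop :=
  ∀ (T : Type) [SeminormedAddCommGroup T] [NormedSpace ℂ T]
    (φ : A →ₗ[ℂ] A →ₗ[ℂ] T), IsProjTensor A A T φ →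
    ∃ e : (T ⧸ balancer φ (fun a b => mulA a b) (fun a b => mulA a b)) ≃L[ℂ] A,
      (∀ a b : A, e (Submodule.Quotient.mk (φ a b)) = mulA a b) ∧
      (∀ c a b : A, e (Submodule.Quotient.mk (φ (mulA c a) b))
          = mulA c (e (Submodule.Quotient.mk (φ a b)))) ∧
      (∀ a b c : A, e (Submodule.Quotient.mk (φ a (mulA b c)))
          = mulA (e (Submodule.Quotient.mk (φ a b))) c)

/-- `(E, l, r)` is a Banach bimodule: left over `(A, mulL)`, right over `(B, mulR)`. -/
def IsBimoduleLaw {A B E : Type} [SeminormedAddCommGroup A] [NormedSpace ℂ A]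
    [SeminormedAddCommGroup B] [NormedSpace ℂ B]
    [SeminormedAddCommGroup E] [NormedSpace ℂ E]
    (mulL : A →L[ℂ] A →L[ℂ] A) (mulR : B →L[ℂ] B →L[ℂ] B)
    (l : A →L[ℂ] E →L[ℂ] E) (r : E →L[ℂ] B →L[ℂ] E) : Prop :=
  (∀ (a a' : A) (x : E), l (mulL a a') x = l a (l a' x)) ∧
  (∀ (x : E) (b b' : B), r (r x b) b' = r x (mulR b b')) ∧
  (∀ (a : A) (x : E) (b : B), r (l a x) b = l a (r x b))

/-!
Multiplication `a ⊗ b ↦ a b` is a contraction on `M_I ⊗̂ M_I`; by associativity it kills the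
balancing relations, so it descends to `M_I ⊗̂_{M_I} M_I → M_I`. An inverse is the bounded map
sending the matrix unit `δ_(i,j)` to the class of `δ_(i,i) ⊗ δ_(i,j)` (matrix units have norm one).
Because the matrix units span a dense subspace and every one of them is a product, checking that
the two maps are mutually inverse reduces to the relations
`δ_(i,j) ⊗ δ_(k,l) ≡ δ_(i,i) ⊗ δ_(i,j) δ_(k,l)` in `M_I ⊗̂_{M_I} M_I`, obtained by moving the
diagonal units `δ_(i,i)` and `δ_(j,j)` across the tensor sign.
-/

namespace L1

variable {X : Type}

theorem summable_norm (f : L1 X) : Summable fun x => ‖f x‖ := by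
  simpa using (lp.memℓp f).summable (by norm_num : (0 : ℝ) < (1 : ℝ≥0∞).toReal)

theorem norm_eq_tsum_norm (f : L1 X) : ‖f‖ = ∑' x, ‖f x‖ := by
  simpa using lp.norm_eq_tsum_rpow (by norm_num : (0 : ℝ) < (1 : ℝ≥0∞).toReal) f

theorem memℓp_one_of_summable_norm {f : X → ℂ} (hf : Summable fun x => ‖f x‖) : Memℓp f 1 :=
  memℓp_gen (by simpa using hf)

open Classical in
theorem delta_apply (x y : X) : delta x y = if y = x then 1 else 0 := by
  simp [delta, lp.single_apply, Pi.single_apply]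

theorem norm_delta (x : X) : ‖delta x‖ = 1 := by
  classical
  simp [delta, lp.norm_single]

theorem hasSum_delta (f : L1 X) : HasSum (fun x => f x • delta x) f := by
  classical
  convert lp.hasSum_single (p := 1) ENNReal.one_ne_top f using 2 with x
  ext y
  by_cases h : y = x <;> simp [delta, lp.single_apply, h]

theorem dense_span_delta : Dense (Submodule.span ℂ (Set.range (delta : X → L1 X)) : Set (L1 X)) :=
  fun f => mem_closure_of_tendsto (hasSum_delta f) <| .of_forall fun _ =>
    Submodule.sum_mem _ fun x _ => Submodule.smul_mem _ _ (Submodule.subset_span ⟨x, rfl⟩)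

theorem clm_ext_delta {V : Type} [TopologicalSpace V] [AddCommGroup V] [Module ℂ V] [T2Space V]
    {f g : L1 X →L[ℂ] V} (h : ∀ x, f (delta x) = g (delta x)) : f = g :=
  ContinuousLinearMap.ext_on dense_span_delta (by rintro _ ⟨x, rfl⟩; exact h x)

section Lift

variable {V : Type} [NormedAddCommGroup V] [NormedSpace ℂ V] [CompleteSpace V]
  {v : X → V} {C : ℝ}

theorem summable_smul (hv : ∀ x, ‖v x‖ ≤ C) (f : L1 X) : Summable fun x => f x • v x :=
  .of_norm_bounded ((summable_norm f).mul_right C) fun x =>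
    (norm_smul_le _ _).trans (mul_le_mul_of_nonneg_left (hv x) (norm_nonneg _))

def lift (v : X → V) (C : ℝ) (hv : ∀ x, ‖v x‖ ≤ C) : L1 X →L[ℂ] V :=
  LinearMap.mkContinuous
    { toFun := fun f => ∑' x, f x • v x
      map_add' := fun f g => by
        simp only [lp.coeFn_add, Pi.add_apply, add_smul]
        exact (summable_smul hv f).tsum_add (summable_smul hv g)
      map_smul' := fun c f => by
        simp only [lp.coeFn_smul, Pi.smul_apply, smul_eq_mul, mul_smul, RingHom.id_apply]
        exact (summable_smul hv f).tsum_const_smul c }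
    C fun f => by
      rw [norm_eq_tsum_norm, mul_comm, ← tsum_mul_right]
      exact tsum_of_norm_bounded ((summable_norm f).mul_right C).hasSum fun x =>
        (norm_smul_le _ _).trans (mul_le_mul_of_nonneg_left (hv x) (norm_nonneg _))

theorem lift_delta (hv : ∀ x, ‖v x‖ ≤ C) (x : X) : lift v C hv (delta x) = v x := by
  classical
  change ∑' y, delta x y • v y = v x
  rw [tsum_eq_single x fun y hy => by simp [delta_apply, hy]]
  simp [delta_apply]

end Lift

section MatrixProduct

variable {I : Type}

theorem injective_triple :
    Function.Injective fun q : (I × I) × I => ((q.1.1, q.2), (q.2, q.1.2)) := by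
  rintro ⟨⟨i, j⟩, k⟩ ⟨⟨i', j'⟩, k'⟩ h
  simp only [Prod.mk.injEq] at h
  obtain ⟨⟨rfl, rfl⟩, -, rfl⟩ := h
  rfl

theorem summable_norm_mul_norm_prod (a b : L1 (I × I)) :
    Summable fun q : (I × I) × (I × I) => ‖a q.1‖ * ‖b q.2‖ :=
  (summable_norm a).mul_of_nonneg (summable_norm b) (fun _ => norm_nonneg _)
    (fun _ => norm_nonneg _)

theorem summable_norm_mul_norm (a b : L1 (I × I)) :
    Summable fun q : (I × I) × I => ‖a (q.1.1, q.2)‖ * ‖b (q.2, q.1.2)‖ :=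
  (summable_norm_mul_norm_prod a b).comp_injective injective_triple |>.congr fun _ => rfl

theorem tsum_norm_mul_norm_le (a b : L1 (I × I)) :
    ∑' p : I × I, ∑' k, ‖a (p.1, k)‖ * ‖b (k, p.2)‖ ≤ ‖a‖ * ‖b‖ := by
  rw [← (summable_norm_mul_norm a b).tsum_prod, norm_eq_tsum_norm a, norm_eq_tsum_norm b,
    (summable_norm a).tsum_mul_tsum (summable_norm b) (summable_norm_mul_norm_prod a b)]
  exact tsum_comp_le_tsum_of_inj (summable_norm_mul_norm_prod a b) (fun _ => by positivity)
    injective_triple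

theorem summable_mul (a b : L1 (I × I)) (i j : I) : Summable fun k => a (i, k) * b (k, j) :=
  .of_norm <| by simpa only [norm_mul] using (summable_norm_mul_norm a b).prod_factor (i, j)

theorem norm_tsum_mul_le (a b : L1 (I × I)) (p : I × I) :
    ‖∑' k, a (p.1, k) * b (k, p.2)‖ ≤ ∑' k, ‖a (p.1, k)‖ * ‖b (k, p.2)‖ := by
  simpa only [norm_mul] using norm_tsum_le_tsum_norm (summable_mul a b p.1 p.2).norm

theorem summable_norm_tsum_mul (a b : L1 (I × I)) :
    Summable fun p : I × I => ‖∑' k, a (p.1, k) * b (k, p.2)‖ :=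
  .of_nonneg_of_le (fun _ => norm_nonneg _) (norm_tsum_mul_le a b)
    (summable_norm_mul_norm a b).prod

variable (I) in
def matMul : L1 (I × I) →L[ℂ] L1 (I × I) →L[ℂ] L1 (I × I) :=
  LinearMap.mkContinuous₂
    (LinearMap.mk₂ ℂ (fun a b => ⟨_, memℓp_one_of_summable_norm (summable_norm_tsum_mul a b)⟩)
      (fun a a' b => lp.ext <| funext fun p => by
        simp only [lp.coeFn_add, Pi.add_apply, add_mul]
        exact (summable_mul a b _ _).tsum_add (summable_mul a' b _ _))
      (fun c a b => lp.ext <| funext fun p => by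
        simp only [lp.coeFn_smul, Pi.smul_apply, smul_eq_mul, mul_assoc]
        exact tsum_mul_left)
      (fun a b b' => lp.ext <| funext fun p => by
        simp only [lp.coeFn_add, Pi.add_apply, mul_add]
        exact (summable_mul a b _ _).tsum_add (summable_mul a b' _ _))
      (fun c a b => lp.ext <| funext fun p => by
        simp only [lp.coeFn_smul, Pi.smul_apply, smul_eq_mul, mul_left_comm _ c]
        exact tsum_mul_left))
    1 fun a b => by
      rw [one_mul, norm_eq_tsum_norm]
      exact (Summable.tsum_le_tsum (norm_tsum_mul_le a b) (summable_norm_tsum_mul a b)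
        (summable_norm_mul_norm a b).prod).trans (tsum_norm_mul_norm_le a b)

theorem matMul_apply (a b : L1 (I × I)) (i j : I) :
    matMul I a b (i, j) = ∑' k, a (i, k) * b (k, j) := rfl

open Classical in
theorem matMul_delta_delta (i j k l : I) :
    matMul I (delta (i, j)) (delta (k, l)) = if j = k then delta (i, l) else 0 := by
  ext ⟨r, s⟩
  rw [matMul_apply, tsum_eq_single j fun m hm => by simp [delta_apply, hm]]
  by_cases hjk : j = k <;> by_cases hri : r = i <;> by_cases hsl : s = l <;>
    simp [delta_apply, hjk, hri, hsl]

theorem matMul_assoc (a b c : L1 (I × I)) :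
    matMul I (matMul I a b) c = matMul I a (matMul I b c) := by
  ext ⟨i, j⟩
  simp only [matMul_apply, ← tsum_mul_right, ← tsum_mul_left, mul_assoc]
  refine Summable.tsum_comm (f := fun l k => a (i, l) * (b (l, k) * c (k, j))) ?_
  refine .of_norm_bounded ((summable_norm b).mul_left (‖a‖ * ‖c‖)) fun q => ?_
  simp only [Function.uncurry, norm_mul]
  calc ‖a (i, q.1)‖ * (‖b q‖ * ‖c (q.2, j)‖) ≤ ‖a‖ * (‖b q‖ * ‖c‖) := by
        gcongr
        exacts [lp.norm_apply_le_norm one_ne_zero a _, lp.norm_apply_le_norm one_ne_zero c _]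
    _ = ‖a‖ * ‖c‖ * ‖b q‖ := by ring

theorem dense_span_matMul :
    Dense (Submodule.span ℂ {c | ∃ a b, matMul I a b = c} : Set (L1 (I × I))) := by
  classical
  refine dense_span_delta.mono (Submodule.span_mono ?_)
  rintro _ ⟨⟨i, j⟩, rfl⟩
  exact ⟨delta (i, i), delta (i, j), by simp [matMul_delta_delta]⟩

end MatrixProduct

end L1

section ProjectiveTensor

variable {E F T G : Type} [SeminormedAddCommGroup E] [NormedSpace ℂ E]
  [SeminormedAddCommGroup F] [NormedSpace ℂ F] [SeminormedAddCommGroup T] [NormedSpace ℂ T]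

theorem projNorm_tmul_le (x : E) (y : F) : projNorm (x ⊗ₜ[ℂ] y) ≤ ‖x‖ * ‖y‖ := by
  refine csInf_le ⟨0, ?_⟩ ⟨1, fun _ => x, fun _ => y, by simp, by simp⟩
  rintro r ⟨n, u, w, -, rfl⟩
  positivity

theorem norm_lift_le_projNorm [SeminormedAddCommGroup G] [NormedSpace ℂ G]
    {B : E →ₗ[ℂ] F →ₗ[ℂ] G} {C : ℝ} (hC : 0 ≤ C) (hB : ∀ x y, ‖B x y‖ ≤ C * (‖x‖ * ‖y‖))
    (z : E ⊗[ℂ] F) : ‖TensorProduct.lift B z‖ ≤ C * projNorm z := by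
  rw [projNorm, ← smul_eq_mul, ← Real.sInf_smul_of_nonneg hC]
  refine le_csInf ?_ ?_
  · obtain ⟨s, rfl⟩ := TensorProduct.exists_finset z
    refine ⟨_, Set.smul_mem_smul_set ⟨s.card, fun i => (s.equivFin.symm i).1.1,
      fun i => (s.equivFin.symm i).1.2, ?_, rfl⟩⟩
    rw [← Finset.sum_attach s]
    exact (Equiv.sum_comp s.equivFin.symm fun p => p.1.1 ⊗ₜ[ℂ] p.1.2).symm
  · rintro _ ⟨r, ⟨n, x, y, rfl, rfl⟩, rfl⟩
    simp only [map_sum, smul_eq_mul, Finset.mul_sum]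
    exact (norm_sum_le _ _).trans (Finset.sum_le_sum fun i _ => hB (x i) (y i))

namespace IsProjTensor

variable {φ : E →ₗ[ℂ] F →ₗ[ℂ] T} (hφ : IsProjTensor E F T φ)
include hφ

theorem norm_apply_le (x : E) (y : F) : ‖φ x y‖ ≤ ‖x‖ * ‖y‖ :=
  (hφ.isometry (x ⊗ₜ y)).trans_le (projNorm_tmul_le x y)

def toCLM₂ : E →L[ℂ] F →L[ℂ] T :=
  LinearMap.mkContinuous₂ φ 1 fun x y => by simpa only [one_mul] using hφ.norm_apply_le x y

theorem ext [TopologicalSpace G] [AddCommGroup G] [Module ℂ G] [T2Space G] {f g : T →L[ℂ] G}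
    (h : ∀ x y, f (φ x y) = g (φ x y)) : f = g := by
  refine DFunLike.coe_injective <| hφ.dense.equalizer f.continuous g.continuous ?_
  ext z
  induction z using TensorProduct.induction_on with
  | zero => simp
  | tmul x y => exact h x y
  | add u w hu hw => simp_all

theorem exists_extend [NormedAddCommGroup G] [NormedSpace ℂ G] [CompleteSpace G]
    (B : E →L[ℂ] F →L[ℂ] G) : ∃ L : T →L[ℂ] G, ∀ x y, L (φ x y) = B x y := by
  have hbound (z : E ⊗[ℂ] F) :
      ‖TensorProduct.lift B.toLinearMap₁₂ z‖ ≤ ‖B‖ * ‖TensorProduct.lift φ z‖ := by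
    rw [hφ.isometry]
    exact norm_lift_le_projNorm (norm_nonneg B) (fun x y => by
      simpa only [ContinuousLinearMap.toLinearMap₁₂_apply_apply_apply, mul_assoc]
        using B.le_opNorm₂ x y) z
  exact ⟨_, fun x y => LinearMap.extendOfNorm_eq hφ.dense ⟨_, hbound⟩ (x ⊗ₜ y)⟩

end IsProjTensor

end ProjectiveTensor

section Balancer

variable {A E F T : Type} [SeminormedAddCommGroup E] [NormedSpace ℂ E]
  [SeminormedAddCommGroup F] [NormedSpace ℂ F] [SeminormedAddCommGroup T] [NormedSpace ℂ T]
  {φ : E →ₗ[ℂ] F →ₗ[ℂ] T} {r : E → A → E} {l : A → F → F}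

instance balancer.isClosed : IsClosed (balancer φ r l : Set T) :=
  Submodule.isClosed_topologicalClosure _

theorem mk_balancer (x : E) (a : A) (y : F) :
    (Submodule.Quotient.mk (φ (r x a) y) : T ⧸ balancer φ r l) =
      Submodule.Quotient.mk (φ x (l a y)) :=
  (Submodule.Quotient.eq _).2 <| Submodule.le_topologicalClosure _ <|
    Submodule.subset_span ⟨x, a, y, rfl⟩

theorem balancer_le_ker {G : Type} [NormedAddCommGroup G] [NormedSpace ℂ G] (f : T →L[ℂ] G)
    (hf : ∀ x a y, f (φ (r x a) y) = f (φ x (l a y))) : balancer φ r l ≤ f.ker :=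
  Submodule.topologicalClosure_minimal _
    (Submodule.span_le.2 <| by rintro _ ⟨x, a, y, rfl⟩; simp [hf]) f.isClosed_ker

end Balancer

theorem selfInduced_of_section {A : Type} [NormedAddCommGroup A] [NormedSpace ℂ A]
    [CompleteSpace A] (mul : A →L[ℂ] A →L[ℂ] A)
    (hassoc : ∀ a b c, mul (mul a b) c = mul a (mul b c))
    (hdense : Dense (Submodule.span ℂ {c | ∃ a b, mul a b = c} : Set A))
    (hsection : ∀ (T : Type) [SeminormedAddCommGroup T] [NormedSpace ℂ T]
      (φ : A →ₗ[ℂ] A →ₗ[ℂ] T), IsProjTensor A A T φ →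
      ∃ J : A →L[ℂ] T ⧸ balancer φ (fun a b => mul a b) (fun a b => mul a b),
        ∀ a b, J (mul a b) = Submodule.Quotient.mk (φ a b)) :
    SelfInduced mul := by
  intro T _ _ φ hφ
  set N := balancer φ (fun a b => mul a b) (fun a b => mul a b)
  obtain ⟨J, hJ⟩ := hsection T φ hφ
  obtain ⟨M, hM⟩ := hφ.exists_extend mul
  let e := N.liftQL M (balancer_le_ker M fun x a y => by simp only [hM, hassoc])
  have he (a b : A) : e (Submodule.Quotient.mk (φ a b)) = mul a b := hM a b
  have heJ : e ∘L J = .id ℂ A :=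
    ContinuousLinearMap.ext_on hdense <| by rintro _ ⟨a, b, rfl⟩; simp [hJ, he]
  have hJM : J ∘L M = N.mkQL := hφ.ext fun a b => by simp [hM, hJ]
  have hJe : J ∘L e = .id ℂ (T ⧸ N) := by
    ext q
    obtain ⟨t, rfl⟩ := N.mkQ_surjective q
    exact congr($hJM t)
  refine ⟨.equivOfInverse e J (fun q => congr($hJe q)) (fun a => congr($heJ a)), he,
    fun c a b => ?_, fun a b c => ?_⟩ <;> simp [he, hassoc]

namespace L1

section MulSection

variable {I T : Type} [SeminormedAddCommGroup T] [NormedSpace ℂ T] [CompleteSpace T]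
  {φ : L1 (I × I) →ₗ[ℂ] L1 (I × I) →ₗ[ℂ] T} (hφ : IsProjTensor (L1 (I × I)) (L1 (I × I)) T φ)

def mulSection :
    L1 (I × I) →L[ℂ] T ⧸ balancer φ (fun a b => matMul I a b) (fun a b => matMul I a b) :=
  lift (fun p => Submodule.Quotient.mk (φ (delta (p.1, p.1)) (delta p))) 1 fun _ =>
    (Submodule.Quotient.norm_mk_le _ _).trans <| (hφ.norm_apply_le _ _).trans (by simp [norm_delta])

theorem mulSection_delta (i j : I) :
    mulSection hφ (delta (i, j)) = Submodule.Quotient.mk (φ (delta (i, i)) (delta (i, j))) :=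
  lift_delta _ _

theorem mulSection_matMul_delta (i j k l : I) :
    mulSection hφ (matMul I (delta (i, j)) (delta (k, l))) =
      Submodule.Quotient.mk (φ (delta (i, j)) (delta (k, l))) := by
  classical
  have hbal (x a y : L1 (I × I)) := mk_balancer (φ := φ) (r := fun a b => matMul I a b)
    (l := fun a b => matMul I a b) x a y
  rw [matMul_delta_delta]
  split_ifs with hjk
  · subst hjk
    have := hbal (delta (i, i)) (delta (i, j)) (delta (j, l))
    simp only [matMul_delta_delta, if_true] at this
    rw [mulSection_delta, ← this]
  · have := hbal (delta (i, j)) (delta (j, j)) (delta (k, l))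
    simp only [matMul_delta_delta, if_true, if_neg hjk, map_zero] at this
    rw [map_zero, this, Submodule.Quotient.mk_zero]

theorem mulSection_matMul (x y : L1 (I × I)) :
    mulSection hφ (matMul I x y) = Submodule.Quotient.mk (φ x y) := by
  set N := balancer φ (fun a b => matMul I a b) (fun a b => matMul I a b)
  have hleft (p : I × I) :
      mulSection hφ ∘L matMul I (delta p) = N.mkQL ∘L hφ.toCLM₂ (delta p) :=
    clm_ext_delta fun q => mulSection_matMul_delta hφ p.1 p.2 q.1 q.2
  have hright : mulSection hφ ∘L (matMul I).flip y = N.mkQL ∘L hφ.toCLM₂.flip y :=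
    clm_ext_delta fun p => congr($(hleft p) y)
  exact congr($hright x)

end MulSection

theorem selfInduced_matMul (I : Type) : SelfInduced (matMul I) :=
  selfInduced_of_section _ matMul_assoc dense_span_matMul fun _ _ _ _ hφ =>
    have := hφ.complete
    ⟨mulSection hφ, mulSection_matMul hφ⟩

end L1

theorem brandt_morita_stmt5_general (I : Type) :
    ∃ mulM : L1 (I × I) →L[ℂ] L1 (I × I) →L[ℂ] L1 (I × I),
      (∀ (a b : L1 (I × I)) (i j : I), mulM a b (i, j) = ∑' k : I, a (i, k) * b (k, j)) ∧
      SelfInduced mulM :=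
  ⟨L1.matMul I, L1.matMul_apply, L1.selfInduced_matMul I⟩

/-- The Banach algebra `M_I` (that is, `ℓ¹(I×I)` with the
convolution matrix product) is self-induced: the multiplication map
`M_I ⊗̂_{M_I} M_I → M_I` is an isomorphism of `M_I`-bimodules. -/
theorem brandt_morita_stmt5 (I : Type) [Nonempty I] :
    ∃ mulM : L1 (I × I) →L[ℂ] L1 (I × I) →L[ℂ] L1 (I × I),
      (∀ (a b : L1 (I × I)) (i j : I), mulM a b (i, j) = ∑' k : I, a (i, k) * b (k, j)) ∧
      SelfInduced mulM :=
  brandt_morita_stmt5_general I
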